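/- If F : ℝ → ℝ is strictly increasing and continuous and ξ : ℝ → ℝ is continuous 2π-periodic, then equality (∫₀^{2π} ξ dθ)(∫₀^{2π} F(ξ) dθ) = 2π ∫₀^{2π} ξ·F(ξ) dθ holds if and only if ξ is constant. -/

import Mathlib

open Real intervalIntegral

open MeasureTheory Set in
/-- A continuous nonnegative function with zero integral vanishes on the interval. -/
lemma zero_on_of_integral_zero {g : ℝ → ℝ} {b : ℝ} (hb : 0 < b) (hc : Continuous g)
    (hg : ∀ x, 0 ≤ g x) (hint : (∫ x in (0:ℝ)..b, g x) = 0) :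
    ∀ x ∈ Set.Icc (0:ℝ) b, g x = 0 := by
  have hae : g =ᵐ[volume.restrict (Set.Ioc 0 b)] 0 :=
    (integral_eq_zero_iff_of_le_of_nonneg_ae hb.le (Filter.Eventually.of_forall hg)
      (hc.intervalIntegrable 0 b)).1 hint
  have hmeas : volume ({x | g x ≠ 0} ∩ Set.Ioc 0 b) = 0 := by
    have h1 : volume.restrict (Set.Ioc 0 b) {x | g x ≠ 0} = 0 := by
      rw [Filter.EventuallyEq, MeasureTheory.ae_iff] at hae
      simpa using hae
    rwa [Measure.restrict_apply ((isOpen_ne_fun hc continuous_const).measurableSet)] at h1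
  have hopen : IsOpen ({x | g x ≠ 0} ∩ Set.Ioo 0 b) :=
    (isOpen_ne_fun hc continuous_const).inter isOpen_Ioo
  have hempty : {x | g x ≠ 0} ∩ Set.Ioo 0 b = ∅ := by
    refine hopen.eq_empty_of_measure_zero (measure_mono_null ?_ hmeas)
    exact Set.inter_subset_inter_right _ Set.Ioo_subset_Ioc_self
  have hIoo : Set.EqOn g 0 (Set.Ioo 0 b) := by
    intro x hx
    by_contra hne
    exact Set.eq_empty_iff_forall_notMem.1 hempty x ⟨hne, hx⟩
  have := hIoo.closure hc continuous_const
  rwa [closure_Ioo hb.ne] at this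

/-- Equality case of Andrews's inequality on the circle for strictly increasing `F`. -/
theorem andrews_inequality_circle_equality_iff
    (ξ F : ℝ → ℝ) (hξc : Continuous ξ)
    (hξper : Function.Periodic ξ (2 * Real.pi))
    (hFc : Continuous F) (hFmono : StrictMono F) :
    (∫ θ in (0:ℝ)..(2 * Real.pi), ξ θ) * (∫ θ in (0:ℝ)..(2 * Real.pi), F (ξ θ)) =
      2 * Real.pi * (∫ θ in (0:ℝ)..(2 * Real.pi), ξ θ * F (ξ θ)) ↔
      ∃ c : ℝ, ∀ θ : ℝ, ξ θ = c := by
  have hπ : (0:ℝ) < 2 * Real.pi := by positivity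
  have hFξ : Continuous fun θ => F (ξ θ) := hFc.comp hξc
  constructor
  · intro heq
    set A := ∫ θ in (0:ℝ)..(2 * Real.pi), ξ θ with hA
    set B := ∫ θ in (0:ℝ)..(2 * Real.pi), F (ξ θ) with hB
    set C := ∫ θ in (0:ℝ)..(2 * Real.pi), ξ θ * F (ξ θ) with hC
    -- pointwise nonnegativity of the Chebyshev integrand
    have hnn : ∀ x φ : ℝ, 0 ≤ (x - ξ φ) * (F x - F (ξ φ)) := by
      intro x φ
      rcases le_total x (ξ φ) with h | h
      · nlinarith [mul_nonneg (sub_nonneg.2 h) (sub_nonneg.2 (hFmono.monotone h))]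
      · nlinarith [mul_nonneg (sub_nonneg.2 h) (sub_nonneg.2 (hFmono.monotone h))]
    -- closed form for the inner integral
    have hinner : ∀ x : ℝ, (∫ φ in (0:ℝ)..(2 * Real.pi), (x - ξ φ) * (F x - F (ξ φ)))
        = 2 * Real.pi * (x * F x) - x * B - F x * A + C := by
      intro x
      have hcong : ∀ φ : ℝ, (x - ξ φ) * (F x - F (ξ φ))
          = (x * F x - x * F (ξ φ)) - F x * ξ φ + ξ φ * F (ξ φ) := fun φ => by ring
      simp only [hcong]
      rw [intervalIntegral.integral_add (f := fun φ => x * F x - x * F (ξ φ) - F x * ξ φ)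
          (g := fun φ => ξ φ * F (ξ φ)) (((continuous_const.sub
            (continuous_const.mul hFξ)).sub (continuous_const.mul hξc)).intervalIntegrable _ _)
          ((hξc.mul hFξ).intervalIntegrable _ _),
        intervalIntegral.integral_sub (f := fun φ => x * F x - x * F (ξ φ))
          (g := fun φ => F x * ξ φ) ((continuous_const.sub
            (continuous_const.mul hFξ)).intervalIntegrable _ _)
          ((continuous_const.mul hξc).intervalIntegrable _ _),
        intervalIntegral.integral_sub (g := fun φ => x * F (ξ φ))
          ((continuous_const : Continuous fun _ : ℝ => x * F x
            ).intervalIntegrable _ _) ((continuous_const.mul hFξ).intervalIntegrable _ _),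
        intervalIntegral.integral_const, intervalIntegral.integral_const_mul,
        intervalIntegral.integral_const_mul]
      simp only [smul_eq_mul, ← hA, ← hB, ← hC]
      ring
    -- the function g
    set g : ℝ → ℝ := fun θ => 2 * Real.pi * (ξ θ * F (ξ θ)) - ξ θ * B - F (ξ θ) * A + C with hg
    have hgc : Continuous g := by
      rw [hg]
      exact ((((continuous_const.mul (hξc.mul hFξ)).sub (hξc.mul continuous_const)).sub
        (hFξ.mul continuous_const)).add continuous_const)
    have hgnn : ∀ θ, 0 ≤ g θ := by
      intro θ
      have h : 0 ≤ ∫ φ in (0:ℝ)..(2 * Real.pi), (ξ θ - ξ φ) * (F (ξ θ) - F (ξ φ)) :=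
        intervalIntegral.integral_nonneg hπ.le (fun φ _ => hnn (ξ θ) φ)
      rwa [hinner (ξ θ)] at h
    have hgint : (∫ θ in (0:ℝ)..(2 * Real.pi), g θ) = 0 := by
      rw [hg,
        intervalIntegral.integral_add
          (f := fun θ => 2 * Real.pi * (ξ θ * F (ξ θ)) - ξ θ * B - F (ξ θ) * A)
          (g := fun _ => C) ((((continuous_const.mul (hξc.mul hFξ)).sub
            (hξc.mul continuous_const)).sub (hFξ.mul continuous_const)).intervalIntegrable _ _)
          (continuous_const.intervalIntegrable _ _),
        intervalIntegral.integral_sub (f := fun θ => 2 * Real.pi * (ξ θ * F (ξ θ)) - ξ θ * B)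
          (g := fun θ => F (ξ θ) * A) (((continuous_const.mul (hξc.mul hFξ)).sub
            (hξc.mul continuous_const)).intervalIntegrable _ _)
          ((hFξ.mul continuous_const).intervalIntegrable _ _),
        intervalIntegral.integral_sub (f := fun θ => 2 * Real.pi * (ξ θ * F (ξ θ)))
          (g := fun θ => ξ θ * B) ((continuous_const.mul
            (hξc.mul hFξ)).intervalIntegrable _ _)
          ((hξc.mul continuous_const).intervalIntegrable _ _),
        intervalIntegral.integral_const, intervalIntegral.integral_const_mul,
        intervalIntegral.integral_mul_const, intervalIntegral.integral_mul_const]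
      simp only [smul_eq_mul, ← hA, ← hB, ← hC]
      linear_combination (-2 : ℝ) * heq
    have hgzero := zero_on_of_integral_zero hπ hgc hgnn hgint
    -- take θ = 0
    have h0 : (∫ φ in (0:ℝ)..(2 * Real.pi), (ξ 0 - ξ φ) * (F (ξ 0) - F (ξ φ))) = 0 := by
      rw [hinner (ξ 0)]
      exact hgzero 0 ⟨le_refl _, hπ.le⟩
    have hhzero := zero_on_of_integral_zero hπ
      (((continuous_const.sub hξc).mul (continuous_const.sub hFξ)) :
        Continuous fun φ => (ξ 0 - ξ φ) * (F (ξ 0) - F (ξ φ)))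
      (fun φ => hnn (ξ 0) φ) h0
    have hconst : ∀ φ ∈ Set.Icc (0:ℝ) (2 * Real.pi), ξ φ = ξ 0 := by
      intro φ hφ
      by_contra hne
      have hprod : (ξ 0 - ξ φ) * (F (ξ 0) - F (ξ φ)) = 0 := hhzero φ hφ
      rcases lt_or_gt_of_ne hne with h | h
      · have h1 : 0 < ξ 0 - ξ φ := by linarith
        have h2 : 0 < F (ξ 0) - F (ξ φ) := sub_pos.2 (hFmono h)
        nlinarith
      · have h1 : ξ 0 - ξ φ < 0 := by linarith
        have h2 : F (ξ 0) - F (ξ φ) < 0 := sub_neg.2 (hFmono h)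
        nlinarith
    refine ⟨ξ 0, fun θ => ?_⟩
    obtain ⟨y, hy, hxy⟩ := hξper.exists_mem_Ico₀ hπ θ
    rw [hxy]
    exact hconst y ⟨hy.1, hy.2.le⟩
  · rintro ⟨c, hc⟩
    simp only [hc, intervalIntegral.integral_const, smul_eq_mul, sub_zero]
    ring
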